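/- Fix s > 0 and define the tent pair-interaction force g_s : ℝ → ℝ by g_s(d) = s·sign(d) if 0 < |d| < 1/2, g_s(d) = −s·sign(d) if 1/2 < |d| ≤ 1, and g_s(0) = 0; define the tent opinion vector field on ℝ³ by F(o)ᵢ = Σ_{j≠i} g_s(o_j − o_i). Let R₁ = {(o₁,o₂,o₃) ∈ ℝ³ : 0 < o₂−o₁ < 1/2, 0 < o₃−o₂ < 1/2, 1/2 < o₃−o₁ < 1}. Then R₁ is a nonempty open subset of ℝ³, R₁ is disjoint from the consensus diagonal {o₁ = o₂ = o₃} and contains no point of {0,1}³, and F(o) = 0 for every o ∈ R₁. -/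

import Mathlib

open Finset in
/-- The tent pair-interaction force: attraction of magnitude `s` for opinion
differences below `1/2`, repulsion above `1/2`, zero at equal opinions. -/
noncomputable def tentForce (s d : ℝ) : ℝ :=
  if 0 < |d| ∧ |d| < 1/2 then s * Real.sign d
  else if 1/2 < |d| ∧ |d| ≤ 1 then -(s * Real.sign d)
  else 0

open Finset in
/-- The tent opinion vector field on `ℝ³` for three fully connected agents. -/
noncomputable def tentField (s : ℝ) (o : Fin 3 → ℝ) : Fin 3 → ℝ :=
  fun i => ∑ j ∈ Finset.univ.erase i, tentForce s (o j - o i)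

/-- The region `R₁` corresponding to the ordering `o₁ < o₂ < o₃` with both
consecutive gaps less than `1/2` and the outer gap in `(1/2, 1)`. -/
def R1 : Set (Fin 3 → ℝ) :=
  {o | 0 < o 1 - o 0 ∧ o 1 - o 0 < 1/2 ∧
       0 < o 2 - o 1 ∧ o 2 - o 1 < 1/2 ∧
       1/2 < o 2 - o 0 ∧ o 2 - o 0 < 1}

/-! On `R₁` each agent is attracted by exactly one of the others and repelled by the remaining
one, with forces of equal magnitude `s`: the middle agent is pulled equally hard towards both
neighbours, and each outer agent is pulled inwards by the middle one and pushed outwards by the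
other outer one. All these interactions stay in the interiors of the linear pieces of the tent,
so the cancellation persists on an open set. -/

open Finset

theorem tentForce_neg (s d : ℝ) : tentForce s (-d) = -tentForce s d := by
  simp only [tentForce, abs_neg, Real.sign_neg, mul_neg]
  split_ifs <;> simp

section TentForce

variable {s d : ℝ}

theorem tentForce_of_pos_of_lt_half (h₀ : 0 < d) (h₁ : d < 1/2) : tentForce s d = s := by
  rw [tentForce, abs_of_pos h₀, if_pos ⟨h₀, h₁⟩, Real.sign_of_pos h₀, mul_one]

theorem tentForce_of_half_lt_of_le_one (h₀ : 1/2 < d) (h₁ : d ≤ 1) : tentForce s d = -s := by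
  have hd : 0 < d := by linarith
  rw [tentForce, abs_of_pos hd, if_neg (fun h => by linarith [h.2]), if_pos ⟨h₀, h₁⟩,
    Real.sign_of_pos hd, mul_one]

end TentForce

theorem tentField_apply_zero (s : ℝ) (o : Fin 3 → ℝ) :
    tentField s o 0 = tentForce s (o 1 - o 0) + tentForce s (o 2 - o 0) := by
  rw [tentField, show univ.erase (0 : Fin 3) = {1, 2} by decide, sum_pair (by decide)]

theorem tentField_apply_one (s : ℝ) (o : Fin 3 → ℝ) :
    tentField s o 1 = tentForce s (o 0 - o 1) + tentForce s (o 2 - o 1) := by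
  rw [tentField, show univ.erase (1 : Fin 3) = {0, 2} by decide, sum_pair (by decide)]

theorem tentField_apply_two (s : ℝ) (o : Fin 3 → ℝ) :
    tentField s o 2 = tentForce s (o 0 - o 2) + tentForce s (o 1 - o 2) := by
  rw [tentField, show univ.erase (2 : Fin 3) = {0, 1} by decide, sum_pair (by decide)]

theorem isOpen_R1 : IsOpen R1 := by
  refine .and ?_ (.and ?_ (.and ?_ (.and ?_ (.and ?_ ?_)))) <;>
    exact isOpen_lt (by fun_prop) (by fun_prop)

theorem R1_nonempty : R1.Nonempty :=
  ⟨![0, 1/3, 2/3], by norm_num [R1, Matrix.cons_val_two, Matrix.tail_cons, Matrix.head_cons]⟩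

theorem not_consensus_of_mem_R1 {o : Fin 3 → ℝ} (ho : o ∈ R1) : ¬ (o 0 = o 1 ∧ o 1 = o 2) :=
  fun h => by linarith [ho.1, h.1]

theorem not_polarized_of_mem_R1 {o : Fin 3 → ℝ} (ho : o ∈ R1) :
    ¬ ∀ i : Fin 3, o i = 0 ∨ o i = 1 := by
  intro h
  obtain ⟨hpos, hhalf, -⟩ := ho
  rcases h 0 with h₀ | h₀ <;> rcases h 1 with h₁ | h₁ <;> rw [h₀, h₁] at hpos hhalf <;> linarith

theorem tentField_eq_zero_of_mem_R1 (s : ℝ) {o : Fin 3 → ℝ} (ho : o ∈ R1) : tentField s o = 0 := by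
  obtain ⟨h₁₀, h₁₀', h₂₁, h₂₁', h₂₀, h₂₀'⟩ := ho
  have near₁₀ := tentForce_of_pos_of_lt_half (s := s) h₁₀ h₁₀'
  have near₂₁ := tentForce_of_pos_of_lt_half (s := s) h₂₁ h₂₁'
  have far₂₀ := tentForce_of_half_lt_of_le_one (s := s) h₂₀ h₂₀'.le
  have field₀ : tentField s o 0 = 0 := by
    rw [tentField_apply_zero, near₁₀, far₂₀, add_neg_cancel]
  have field₁ : tentField s o 1 = 0 := by
    rw [tentField_apply_one, ← neg_sub (o 1) (o 0), tentForce_neg, near₁₀, near₂₁, neg_add_cancel]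
  have field₂ : tentField s o 2 = 0 := by
    rw [tentField_apply_two, ← neg_sub (o 2) (o 0), ← neg_sub (o 2) (o 1), tentForce_neg,
      tentForce_neg, far₂₀, near₂₁, neg_neg, add_neg_cancel]
  funext i
  fin_cases i
  exacts [field₀, field₁, field₂]

theorem tent_fixed_point_region_general (s : ℝ) :
    R1.Nonempty ∧ IsOpen R1 ∧
    (∀ o ∈ R1, ¬ (o 0 = o 1 ∧ o 1 = o 2)) ∧
    (∀ o ∈ R1, ¬ (∀ i : Fin 3, o i = 0 ∨ o i = 1)) ∧
    (∀ o ∈ R1, tentField s o = 0) :=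
  ⟨R1_nonempty, isOpen_R1, fun _ => not_consensus_of_mem_R1, fun _ => not_polarized_of_mem_R1,
    fun _ => tentField_eq_zero_of_mem_R1 s⟩

/-- Theorem (fixedPointRegion): `R₁` is a nonempty open set, disjoint from the
consensus diagonal and from the polarization states `{0,1}³`, consisting
entirely of fixed points of the tent opinion vector field. -/
theorem tent_fixed_point_region (s : ℝ) (hs : 0 < s) :
    R1.Nonempty ∧ IsOpen R1 ∧
    (∀ o ∈ R1, ¬ (o 0 = o 1 ∧ o 1 = o 2)) ∧
    (∀ o ∈ R1, ¬ (∀ i : Fin 3, o i = 0 ∨ o i = 1)) ∧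
    (∀ o ∈ R1, tentField s o = 0) :=
  tent_fixed_point_region_general s
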